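/- Let Y be standard Gaussian in R^p, p ≥ 1, and λ_1, ..., λ_p > 0. Then for each i, E[λ_i Y_i² / Σ_j λ_j Y_j²] = (λ_i / 2) ∫_0^∞ dx / ( (1 + λ_i x) ∏_{j=1}^p (1 + λ_j x)^{1/2} ). -/

import Mathlib

/-!
Write `1 / S = ∫₀^∞ exp (-S x) dx` for `S = ∑ⱼ λⱼ Yⱼ²`; since `λᵢ Yᵢ² / S ≤ 1`, Fubini turns the
eigenvalue into `∫₀^∞ E[λᵢ Yᵢ² exp (-x S)] dx`. The expectation factorises over the independent
coordinates. Tilting the standard Gaussian by `exp (-c y²)` gives `(1 + 2c)^(-1/2)` times the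
centred Gaussian of variance `1 / (1 + 2c)`, so `E[exp (-c Y²)] = (1 + 2c)^(-1/2)` and
`E[Y² exp (-c Y²)] = (1 + 2c)^(-3/2)`. The substitution `x ↦ x / 2` gives the stated form.
-/

open MeasureTheory ProbabilityTheory Real

/-- The law of a vector of `p` i.i.d. standard normal random variables. -/
noncomputable def stdGaussianPi (p : ℕ) : Measure (Fin p → ℝ) :=
  Measure.pi fun _ => gaussianReal 0 1

/-- The `i`-th eigenvalue of the spatial sign covariance matrix corresponding to
shape eigenvalues `lam`. -/
noncomputable def sscmEigen (p : ℕ) (lam : Fin p → ℝ) (i : Fin p) : ℝ :=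
  ∫ ω, lam i * (ω i) ^ 2 / (∑ j, lam j * (ω j) ^ 2) ∂(stdGaussianPi p)

open scoped NNReal

open Finset
open Set (Ioi mem_Ioi)

lemma integral_exp_neg_mul_Ioi_zero {s : ℝ} (hs : 0 < s) :
    ∫ x in Ioi (0 : ℝ), exp (-s * x) = s⁻¹ := by
  simpa [neg_div] using integral_exp_mul_Ioi (neg_lt_zero.2 hs) 0

lemma integral_div_eq_integral_Ioi_integral_mul_exp {α : Type*} [MeasurableSpace α]
    {μ : Measure α} [SFinite μ] {f S : α → ℝ} (hf : Measurable f) (hS : Measurable S)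
    (hS_pos : ∀ᵐ a ∂μ, 0 < S a) (hfS : Integrable (fun a => f a / S a) μ) :
    ∫ a, f a / S a ∂μ = ∫ x in Ioi 0, ∫ a, f a * exp (-S a * x) ∂μ := by
  have hlaplace : ∀ᵐ a ∂μ, ∫ x in Ioi 0, f a * exp (-S a * x) = f a / S a := by
    filter_upwards [hS_pos] with a ha
    rw [integral_const_mul, integral_exp_neg_mul_Ioi_zero ha, div_eq_mul_inv]
  have hmeas : Measurable (Function.uncurry fun a x => f a * exp (-S a * x)) := by
    fun_prop
  have hint : Integrable (Function.uncurry fun a x => f a * exp (-S a * x))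
      (μ.prod (volume.restrict (Ioi 0))) := by
    refine (integrable_prod_iff hmeas.aestronglyMeasurable).2 ⟨?_, ?_⟩
    · filter_upwards [hS_pos] with a ha
      exact (exp_neg_integrableOn_Ioi 0 ha).const_mul (f a)
    · refine hfS.norm.congr ?_
      filter_upwards [hS_pos] with a ha
      simp only [Function.uncurry_apply_pair, norm_mul, norm_div, Real.norm_eq_abs,
        abs_of_pos (exp_pos _), abs_of_pos ha]
      rw [integral_const_mul, integral_exp_neg_mul_Ioi_zero ha, div_eq_mul_inv]
  rw [← integral_integral_swap hint]
  exact integral_congr_ae (hlaplace.mono fun a ha => ha.symm)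

lemma gaussianPDFReal_zero_one_mul_exp_neg_mul_sq {c : ℝ} (hc : 0 < 1 + 2 * c) (y : ℝ) :
    gaussianPDFReal 0 1 y * exp (-(c * y ^ 2))
      = (√(1 + 2 * c))⁻¹ * gaussianPDFReal 0 (1 + 2 * c).toNNReal⁻¹ y := by
  simp only [gaussianPDFReal, NNReal.coe_inv, Real.coe_toNNReal _ hc.le, NNReal.coe_one,
    mul_one, sub_zero]
  rw [sqrt_mul' _ (inv_nonneg.2 hc.le), sqrt_inv, mul_assoc, ← exp_add]
  have : √(1 + 2 * c) ≠ 0 := by positivity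
  field_simp
  ring_nf

lemma integral_mul_exp_neg_mul_sq_gaussianReal {c : ℝ} (hc : 0 < 1 + 2 * c) (g : ℝ → ℝ) :
    ∫ y, g y * exp (-(c * y ^ 2)) ∂gaussianReal 0 1
      = (√(1 + 2 * c))⁻¹ * ∫ y, g y ∂gaussianReal 0 (1 + 2 * c).toNNReal⁻¹ := by
  have hv : (1 + 2 * c).toNNReal⁻¹ ≠ 0 := by simpa using hc
  simp only [integral_gaussianReal_eq_integral_smul one_ne_zero,
    integral_gaussianReal_eq_integral_smul hv, smul_eq_mul, ← integral_const_mul]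
  congr 1 with y
  rw [mul_left_comm, gaussianPDFReal_zero_one_mul_exp_neg_mul_sq hc]
  ring

lemma integral_sq_gaussianReal_zero (v : ℝ≥0) : ∫ y, y ^ 2 ∂gaussianReal 0 v = v := by
  rw [← variance_of_integral_eq_zero aemeasurable_id' integral_id_gaussianReal,
    variance_fun_id_gaussianReal]

section GaussianVector

variable {ι : Type*} [Fintype ι]

lemma integral_sq_mul_exp_neg_sum_mul_sq {c : ι → ℝ} (hc : ∀ j, 0 < 1 + 2 * c j) (i : ι) :
    ∫ ω, ω i ^ 2 * exp (-∑ j, c j * ω j ^ 2) ∂Measure.pi (fun _ : ι => gaussianReal 0 1)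
      = (1 + 2 * c i)⁻¹ * ∏ j, (√(1 + 2 * c j))⁻¹ := by
  classical
  have hfactor : ∀ ω : ι → ℝ, ω i ^ 2 * exp (-∑ j, c j * ω j ^ 2)
      = ∏ j, (if j = i then ω j ^ 2 else 1) * exp (-(c j * ω j ^ 2)) := by
    intro ω
    rw [prod_mul_distrib, prod_ite_eq' univ i, if_pos (mem_univ i), ← exp_sum, sum_neg_distrib]
  have hfactor_integral : ∀ j, ∫ y, (if j = i then y ^ 2 else 1) * exp (-(c j * y ^ 2))
      ∂gaussianReal 0 1 = (if j = i then (1 + 2 * c j)⁻¹ else 1) * (√(1 + 2 * c j))⁻¹ := by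
    intro j
    rw [integral_mul_exp_neg_mul_sq_gaussianReal (hc j), mul_comm]
    split_ifs
    · rw [integral_sq_gaussianReal_zero, NNReal.coe_inv, Real.coe_toNNReal _ (hc j).le]
    · simp
  simp_rw [hfactor]
  rw [integral_fintype_prod_eq_prod
      fun j y => (if j = i then y ^ 2 else 1) * exp (-(c j * y ^ 2)),
    prod_congr rfl fun j _ => hfactor_integral j, prod_mul_distrib, prod_ite_eq' univ i,
    if_pos (mem_univ i)]

variable {lam : ι → ℝ}

lemma ae_sum_mul_sq_pos (hlam : ∀ j, 0 ≤ lam j) {i : ι} (hi : 0 < lam i) :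
    ∀ᵐ ω ∂Measure.pi (fun _ : ι => gaussianReal 0 1), 0 < ∑ j, lam j * ω j ^ 2 := by
  have := nullSingletonClass_gaussianReal (μ := 0) one_ne_zero
  filter_upwards [Measure.ae_eval_ne _ i 0] with ω hω
  exact (mul_pos hi (by positivity)).trans_le <| single_le_sum
    (fun j _ => mul_nonneg (hlam j) (sq_nonneg _)) (mem_univ i)

lemma integrable_mul_sq_div_sum_mul_sq (hlam : ∀ j, 0 ≤ lam j) (μ : Measure (ι → ℝ))
    [IsFiniteMeasure μ] (i : ι) :
    Integrable (fun ω => lam i * ω i ^ 2 / ∑ j, lam j * ω j ^ 2) μ := by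
  refine (integrable_const (1 : ℝ)).mono' (Measurable.aestronglyMeasurable (by fun_prop))
    (ae_of_all _ fun ω => ?_)
  have hterm : ∀ j, 0 ≤ lam j * ω j ^ 2 := fun j => mul_nonneg (hlam j) (sq_nonneg _)
  have hsum : lam i * ω i ^ 2 ≤ ∑ j, lam j * ω j ^ 2 :=
    single_le_sum (fun j _ => hterm j) (mem_univ i)
  rw [norm_of_nonneg (div_nonneg (hterm i) ((hterm i).trans hsum))]
  exact div_le_one_of_le₀ hsum ((hterm i).trans hsum)

end GaussianVector

instance isProbabilityMeasure_stdGaussianPi (p : ℕ) :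
    IsProbabilityMeasure (stdGaussianPi p) := by
  unfold stdGaussianPi
  infer_instance

theorem sscmEigen_integral_repr_general (p : ℕ) (lam : Fin p → ℝ)
    (hpos : ∀ i, 0 < lam i) (i : Fin p) :
    sscmEigen p lam i =
      lam i / 2 *
        ∫ x in Set.Ioi (0 : ℝ),
          1 / ((1 + lam i * x) * ∏ j, Real.sqrt (1 + lam j * x)) := by
  have hlam : ∀ j, 0 ≤ lam j := fun j => (hpos j).le
  have hinner : ∀ x ∈ Ioi (0 : ℝ),
      ∫ ω, lam i * ω i ^ 2 * exp (-(∑ j, lam j * ω j ^ 2) * x) ∂stdGaussianPi p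
        = lam i * (1 / ((1 + lam i * (2 * x)) * ∏ j, √(1 + lam j * (2 * x)))) := by
    intro x hx
    have hc : ∀ j, 0 < 1 + 2 * (lam j * x) := fun j => by nlinarith [hpos j, mem_Ioi.1 hx]
    simp_rw [mul_assoc (lam i), neg_mul, sum_mul, mul_right_comm _ _ x]
    rw [integral_const_mul, stdGaussianPi, integral_sq_mul_exp_neg_sum_mul_sq hc, one_div,
      mul_inv, prod_inv_distrib]
    simp only [mul_left_comm (2 : ℝ) (lam _) x]
  rw [sscmEigen, integral_div_eq_integral_Ioi_integral_mul_exp (μ := stdGaussianPi p)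
      (by fun_prop) (by fun_prop)
      (ae_sum_mul_sq_pos hlam (hpos i)) (integrable_mul_sq_div_sum_mul_sq hlam _ i),
    setIntegral_congr_fun measurableSet_Ioi hinner, integral_const_mul,
    integral_comp_mul_left_Ioi (fun x => 1 / ((1 + lam i * x) * ∏ j, √(1 + lam j * x))) 0 two_pos,
    mul_zero, smul_eq_mul]
  ring

theorem sscmEigen_integral_repr (p : ℕ) (hp : 1 ≤ p) (lam : Fin p → ℝ)
    (hpos : ∀ i, 0 < lam i) (i : Fin p) :
    sscmEigen p lam i =
      lam i / 2 *
        ∫ x in Set.Ioi (0 : ℝ),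
          1 / ((1 + lam i * x) * ∏ j, Real.sqrt (1 + lam j * x)) :=
  sscmEigen_integral_repr_general p lam hpos i
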